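/- arXiv:1503.00013 — 8 statements merged into one kernel-verified Lean document; each statement's English description precedes it below -/
import Mathlib

section
/- Let any (3; N_1, N_2, K_d, K) exact-repair MLD-R code (n = 3 nodes, d = 2 messages) be given. Then log K_d ≥ log N_1 + (1/2)·log N_2. -/
/-- An `(n; N₁, …, N_{n-1}, K_d, K)` exact-repair MLD-R code with `n` storage nodes and
`d = n - 1` independent messages, where message `k` (0-indexed) takes values in
`Fin (N k)`, each node stores an element of `Fin Kd`, and each repair message is an
element of `Fin K`. -/
structure MLDRCode (n : ℕ) (N : Fin (n - 1) → ℕ) (Kd K : ℕ) where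
  /-- node encoders: node `i` stores `enc i m` -/
  enc : Fin n → ((k : Fin (n - 1)) → Fin (N k)) → Fin Kd
  /-- decoders: from the contents stored on the nodes in `A`, produce messages
  (only the first `|A|` of them are required to be correct) -/
  dec : (A : Finset (Fin n)) → ((i : A) → Fin Kd) → ((k : Fin (n - 1)) → Fin (N k))
  /-- repair encoders: helper node `i` sends `repEnc i j w` to the failed node `j`,
  where `w` is the content stored on node `i` -/
  repEnc : Fin n → Fin n → Fin Kd → Fin K
  /-- repair decoders: the failed node `j` regenerates its content from the repair
  messages sent by the other `n - 1` nodes -/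
  repDec : (j : Fin n) → ((i : {i : Fin n // i ≠ j}) → Fin K) → Fin Kd
  /-- reconstruction condition: any nonempty set `A` of at most `n - 1` nodes
  recovers the first `|A|` messages -/
  reconstruct : ∀ (A : Finset (Fin n)), A.Nonempty → A.card ≤ n - 1 →
    ∀ m : (k : Fin (n - 1)) → Fin (N k), ∀ k : Fin (n - 1), (k : ℕ) < A.card →
      dec A (fun i => enc i.1 m) k = m k
  /-- exact repair condition -/
  repair : ∀ (j : Fin n), ∀ m : (k : Fin (n - 1)) → Fin (N k),
      repDec j (fun i => repEnc i.1 j (enc i.1 m)) = enc j m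

/-- **(n = 3) storage bound.** For any `(3; N₁, N₂, K_d, K)` exact-repair MLD-R code,
`log K_d ≥ log N₁ + (1/2)·log N₂`. -/
theorem mldr3_alpha_bound (N1 N2 Kd K : ℕ) (hN1 : 0 < N1) (hN2 : 0 < N2)
    (hKd : 0 < Kd) (hK : 0 < K)
    (C : MLDRCode 3 ![N1, N2] Kd K) :
    Real.log Kd ≥ Real.log N1 + (1 / 2) * Real.log N2 := by
  classical
  set mk : Fin N1 → Fin N2 → ((k : Fin 2) → Fin (![N1,N2] k)) :=
    fun x y k => match k with | ⟨0,_⟩ => x | ⟨1,_⟩ => y with hmk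
  have hmk0 : ∀ x y, mk x y 0 = x := fun _ _ => rfl
  have hmk1 : ∀ x y, mk x y 1 = y := fun _ _ => rfl
  -- single node determines first message
  have single : ∀ (j : Fin 3) (m m' : (k : Fin 2) → Fin (![N1,N2] k)),
      C.enc j m = C.enc j m' → m 0 = m' 0 := by
    intro j m m' h
    have h1 := C.reconstruct {j} ⟨j, Finset.mem_singleton_self j⟩ (by simp) m 0 (by simp)
    have h2 := C.reconstruct {j} ⟨j, Finset.mem_singleton_self j⟩ (by simp) m' 0 (by simp)
    have he : (fun i : ({j} : Finset (Fin 3)) => C.enc i.1 m)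
        = (fun i : ({j} : Finset (Fin 3)) => C.enc i.1 m') := by
      funext i
      have : i.1 = j := Finset.mem_singleton.mp i.2
      rw [this, h]
    rw [← h1, ← h2, he]
  -- pair of nodes 0,1 determines both messages
  have pair : ∀ (m m' : (k : Fin 2) → Fin (![N1,N2] k)),
      C.enc 0 m = C.enc 0 m' → C.enc 1 m = C.enc 1 m' → m = m' := by
    intro m m' h0 h1
    have hA : ({0,1} : Finset (Fin 3)).card = 2 := by decide
    have he : (fun i : ({0,1} : Finset (Fin 3)) => C.enc i.1 m)
        = (fun i : ({0,1} : Finset (Fin 3)) => C.enc i.1 m') := by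
      funext i
      rcases Finset.mem_insert.mp i.2 with h | h
      · rw [h, h0]
      · rw [Finset.mem_singleton.mp h, h1]
    have r := fun k hk => C.reconstruct {0,1} ⟨0, by decide⟩ (by decide) m k hk
    have r' := fun k hk => C.reconstruct {0,1} ⟨0, by decide⟩ (by decide) m' k hk
    funext k
    have hk : (k : ℕ) < ({0,1} : Finset (Fin 3)).card := by rw [hA]; exact k.2
    rw [← r k hk, ← r' k hk, he]
  -- images
  set a : Fin N1 → Finset (Fin Kd) := fun x => Finset.univ.image (fun y => C.enc 0 (mk x y))
  set b : Fin N1 → Finset (Fin Kd) := fun x => Finset.univ.image (fun y => C.enc 1 (mk x y))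
  have hab : ∀ x, (N2 : ℕ) ≤ (a x).card * (b x).card := by
    intro x
    have hinj : Function.Injective (fun y : Fin N2 => (C.enc 0 (mk x y), C.enc 1 (mk x y))) := by
      intro y y' h
      have := pair (mk x y) (mk x y') (congrArg Prod.fst h) (congrArg Prod.snd h)
      have := congrFun this 1
      rwa [hmk1 x y, hmk1 x y'] at this
    calc (N2 : ℕ) = (Finset.univ.image (fun y : Fin N2 => (C.enc 0 (mk x y), C.enc 1 (mk x y)))).card := by
          rw [Finset.card_image_of_injective _ hinj, Finset.card_univ, Fintype.card_fin]
      _ ≤ ((a x) ×ˢ (b x)).card := by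
          apply Finset.card_le_card
          intro p hp
          simp only [Finset.mem_image, Finset.mem_univ, true_and] at hp
          obtain ⟨y, hy⟩ := hp
          rw [← hy]
          exact Finset.mem_product.mpr ⟨Finset.mem_image_of_mem _ (Finset.mem_univ y),
            Finset.mem_image_of_mem _ (Finset.mem_univ y)⟩
      _ = (a x).card * (b x).card := Finset.card_product _ _
  have hdisj : ∀ (j : Fin 3), ∀ x x' : Fin N1, x ≠ x' →
      Disjoint (Finset.univ.image (fun y => C.enc j (mk x y)))
               (Finset.univ.image (fun y => C.enc j (mk x' y))) := by
    intro j x x' hxx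
    rw [Finset.disjoint_left]
    intro w hw hw'
    simp only [Finset.mem_image, Finset.mem_univ, true_and] at hw hw'
    obtain ⟨y, hy⟩ := hw; obtain ⟨y', hy'⟩ := hw'
    have := single j (mk x y) (mk x' y') (hy.trans hy'.symm)
    rw [hmk0 x y, hmk0 x' y'] at this
    exact hxx this
  have hsum : ∀ (j : Fin 3), ∑ x : Fin N1, (Finset.univ.image (fun y => C.enc j (mk x y))).card ≤ Kd := by
    intro j
    rw [← Finset.card_biUnion (fun x _ x' _ h => hdisj j x x' h)]
    calc _ ≤ (Finset.univ : Finset (Fin Kd)).card := Finset.card_le_univ _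
      _ = Kd := by simp
  have hsa : ∑ x, (a x).card ≤ Kd := hsum 0
  have hsb : ∑ x, (b x).card ≤ Kd := hsum 1
  -- real arithmetic
  have key : (N1 : ℝ) * Real.sqrt N2 ≤ Kd := by
    have step : ∀ x : Fin N1, Real.sqrt N2 ≤ (((a x).card : ℝ) + (b x).card) / 2 := by
      intro x
      have h1 : Real.sqrt N2 ≤ Real.sqrt ((a x).card * (b x).card) := by
        apply Real.sqrt_le_sqrt
        exact_mod_cast hab x
      have h2 : Real.sqrt (((a x).card : ℝ) * (b x).card) ≤ (((a x).card : ℝ) + (b x).card) / 2 := by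
        have ha := Real.sq_sqrt (by positivity : (0:ℝ) ≤ ((a x).card : ℝ))
        have hb := Real.sq_sqrt (by positivity : (0:ℝ) ≤ ((b x).card : ℝ))
        have hs := sq_nonneg (Real.sqrt ((a x).card) - Real.sqrt ((b x).card))
        rw [Real.sqrt_mul (by positivity)]
        nlinarith [Real.sqrt_nonneg ((a x).card : ℝ), Real.sqrt_nonneg ((b x).card : ℝ)]
      calc Real.sqrt N2 ≤ _ := h1
        _ ≤ _ := by push_cast at h2 ⊢; exact h2
    calc (N1 : ℝ) * Real.sqrt N2 = ∑ _x : Fin N1, Real.sqrt N2 := by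
          rw [Finset.sum_const, Finset.card_univ, Fintype.card_fin, nsmul_eq_mul]
      _ ≤ ∑ x, (((a x).card : ℝ) + (b x).card) / 2 := Finset.sum_le_sum (fun x _ => step x)
      _ = ((∑ x, ((a x).card : ℝ)) + ∑ x, ((b x).card : ℝ)) / 2 := by
          rw [← Finset.sum_add_distrib, Finset.sum_div]
      _ ≤ ((Kd : ℝ) + Kd) / 2 := by
          have ha : (∑ x, ((a x).card : ℝ)) ≤ Kd := by exact_mod_cast hsa
          have hb : (∑ x, ((b x).card : ℝ)) ≤ Kd := by exact_mod_cast hsb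
          linarith
      _ = Kd := by ring
  have hpos : (0:ℝ) < (N1 : ℝ) * Real.sqrt N2 := by
    have : (0:ℝ) < Real.sqrt N2 := Real.sqrt_pos.mpr (by exact_mod_cast hN2)
    positivity
  have := Real.log_le_log hpos key
  rw [Real.log_mul (by positivity) (by positivity), Real.log_sqrt (by positivity)] at this
  linarith
end

section
/- Let any (3; N_1, N_2, K_d, K) exact-repair MLD-R code (n = 3 nodes, d = 2 messages) be given. Then log K ≥ (1/2)·log N_1 + (1/3)·log N_2. -/
open Finset Function

section FiberLogSum

variable {Ω α β γ : Type*} [Fintype Ω] [DecidableEq α] [DecidableEq β]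

noncomputable def fiberLogSum (g : Ω → α) : ℝ :=
  ∑ ω, Real.log #{ω' | g ω' = g ω}

lemma card_fiber_pos (g : Ω → α) (ω : Ω) : (0 : ℝ) < #{ω' | g ω' = g ω} :=
  Nat.cast_pos.2 (card_pos.2 ⟨ω, by simp⟩)

lemma fiberLogSum_mono {g : Ω → α} {u : Ω → β} (h : u.FactorsThrough g) :
    fiberLogSum g ≤ fiberLogSum u :=
  sum_le_sum fun ω _ => Real.log_le_log (card_fiber_pos g ω) <| by
    gcongr with ω'
    exact fun hω' => h hω'

lemma fiberLogSum_eq_zero_of_injective {g : Ω → α} (hg : Injective g) : fiberLogSum g = 0 :=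
  sum_eq_zero fun ω _ => by
    rw [card_eq_one.2 ⟨ω, by ext; simp [hg.eq_iff]⟩, Nat.cast_one, Real.log_one]

lemma fiberLogSum_le_of_injective_prodMk [Fintype γ] {g : Ω → α} (f : Ω → γ)
    (h : Injective fun ω => (g ω, f ω)) :
    fiberLogSum g ≤ Fintype.card Ω * Real.log (Fintype.card γ) := by
  have hfiber (ω : Ω) : #{ω' | g ω' = g ω} ≤ Fintype.card γ :=
    card_le_card_of_injOn f (fun _ _ => mem_coe.2 (mem_univ _)) fun a ha b hb hab =>
      h (Prod.ext ((mem_filter.1 ha).2.trans (mem_filter.1 hb).2.symm) hab)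
  calc fiberLogSum g ≤ ∑ _ω : Ω, Real.log (Fintype.card γ) :=
        sum_le_sum fun ω _ => Real.log_le_log (card_fiber_pos g ω) (mod_cast hfiber ω)
    _ = Fintype.card Ω * Real.log (Fintype.card γ) := by simp

lemma sum_log_nonpos_of_sum_le_card {ι : Type*} (s : Finset ι) {r : ι → ℝ}
    (hr : ∀ i ∈ s, 0 < r i) (hsum : ∑ i ∈ s, r i ≤ #s) : ∑ i ∈ s, Real.log (r i) ≤ 0 :=
  calc ∑ i ∈ s, Real.log (r i) ≤ ∑ i ∈ s, (r i - 1) :=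
        sum_le_sum fun i hi => Real.log_le_sub_one_of_pos (hr i hi)
    _ ≤ 0 := by simpa [sum_sub_distrib] using hsum

lemma sum_inv_card_fiber (g : Ω → α) :
    ∑ ω, (#{ω' | g ω' = g ω} : ℝ)⁻¹ = #(univ.image g) := by
  rw [← sum_fiberwise_of_maps_to (g := g) fun ω _ => mem_image_of_mem g (mem_univ ω),
    card_eq_sum_ones, Nat.cast_sum]
  refine sum_congr rfl fun b hb => ?_
  obtain ⟨ω₀, -, rfl⟩ := mem_image.1 hb
  rw [sum_congr rfl fun ω hω => by rw [(mem_filter.1 hω).2], sum_const, nsmul_eq_mul,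
    mul_inv_cancel₀ (card_fiber_pos g ω₀).ne', Nat.cast_one]

lemma card_mul_log_sub_log_le_fiberLogSum [Fintype α] (g : Ω → α) :
    Fintype.card Ω * (Real.log (Fintype.card Ω) - Real.log (Fintype.card α)) ≤ fiberLogSum g := by
  rcases isEmpty_or_nonempty Ω with hΩ | hΩ
  · simp [fiberLogSum]
  have hα : Nonempty α := hΩ.map g
  set n : ℝ := (Fintype.card Ω : ℝ)
  set a : ℝ := (Fintype.card α : ℝ)
  have hn : 0 < n := Nat.cast_pos.2 Fintype.card_pos
  have ha : 0 < a := Nat.cast_pos.2 Fintype.card_pos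
  -- Gibbs' inequality against the uniform distribution on `α`
  have hgibbs := sum_log_nonpos_of_sum_le_card univ
    (r := fun ω => n / a * (#{ω' | g ω' = g ω} : ℝ)⁻¹)
    (fun ω _ => by have := card_fiber_pos g ω; positivity) <| by
      rw [← mul_sum, sum_inv_card_fiber, card_univ, div_mul_eq_mul_div, div_le_iff₀ ha]
      gcongr
      exact Nat.cast_le.2 (card_le_univ _)
  have hlog (ω : Ω) : Real.log (n / a * (#{ω' | g ω' = g ω} : ℝ)⁻¹) =
      Real.log n - Real.log a - Real.log #{ω' | g ω' = g ω} := by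
    rw [Real.log_mul (by positivity) (inv_ne_zero (card_fiber_pos g ω).ne'),
      Real.log_div hn.ne' ha.ne', Real.log_inv]
    ring
  simp only [hlog, sum_sub_distrib, sum_const, card_univ, nsmul_eq_mul] at hgibbs
  unfold fiberLogSum
  linarith

lemma sum_inv_card_fiber_prodMk_le [DecidableEq γ] {X : Ω → α} {Y : Ω → β} {U : Ω → γ}
    (hX : U.FactorsThrough X) (hY : U.FactorsThrough Y) (ω₁ ω₂ : Ω) :
    ∑ ω with X ω = X ω₁ ∧ Y ω = Y ω₂,
      ((#{ω' | (X ω', Y ω') = (X ω, Y ω)} : ℝ) * #{ω' | U ω' = U ω})⁻¹ ≤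
    if U ω₂ = U ω₁ then (#{ω' | U ω' = U ω₁} : ℝ)⁻¹ else 0 := by
  set S : Finset Ω := {ω | X ω = X ω₁ ∧ Y ω = Y ω₂}
  rcases S.eq_empty_or_nonempty with hS | ⟨ω₀, hω₀⟩
  · rw [hS, sum_empty]
    split_ifs <;> positivity
  obtain ⟨hX₀, hY₀⟩ := (mem_filter.1 hω₀).2
  -- a nonempty cell `S` is a whole fibre of `(X, Y)`, lying in the `U`-fibre of both `ω₁`, `ω₂`
  have hfiber (ω : Ω) (hω : ω ∈ S) :
      ((#{ω' | (X ω', Y ω') = (X ω, Y ω)} : ℝ) * #{ω' | U ω' = U ω})⁻¹ =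
        ((#S : ℝ) * #{ω' | U ω' = U ω₁})⁻¹ := by
    obtain ⟨h₁, h₂⟩ := (mem_filter.1 hω).2
    rw [hX h₁]
    congr 4
    ext
    simp [S, h₁, h₂]
  rw [if_pos ((hY hY₀).symm.trans (hX hX₀)), sum_congr rfl hfiber, sum_const, nsmul_eq_mul,
    mul_inv, ← mul_assoc, mul_inv_cancel₀ (Nat.cast_pos.2 (card_pos.2 ⟨ω₀, hω₀⟩)).ne', one_mul]

lemma sum_card_fiber_mul_div_le [DecidableEq γ] {X : Ω → α} {Y : Ω → β} {U : Ω → γ}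
    (hX : U.FactorsThrough X) (hY : U.FactorsThrough Y) :
    ∑ ω, (#{ω' | X ω' = X ω} : ℝ) * #{ω' | Y ω' = Y ω} *
      ((#{ω' | (X ω', Y ω') = (X ω, Y ω)} : ℝ) * #{ω' | U ω' = U ω})⁻¹ ≤ Fintype.card Ω := by
  set w : Ω → ℝ := fun ω =>
    ((#{ω' | (X ω', Y ω') = (X ω, Y ω)} : ℝ) * #{ω' | U ω' = U ω})⁻¹
  calc ∑ ω, (#{ω' | X ω' = X ω} : ℝ) * #{ω' | Y ω' = Y ω} * w ω
      = ∑ ω, ∑ ω₁, ∑ ω₂, if X ω = X ω₁ ∧ Y ω = Y ω₂ then w ω else 0 := by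
        refine sum_congr rfl fun ω _ => ?_
        rw [natCast_card_filter, natCast_card_filter, sum_mul_sum, sum_mul]
        simp only [sum_mul, ite_mul, one_mul, zero_mul, ite_and, eq_comm]
    _ = ∑ ω₁, ∑ ω₂, ∑ ω with X ω = X ω₁ ∧ Y ω = Y ω₂, w ω := by
        simp only [sum_filter]
        rw [sum_comm]
        exact sum_congr rfl fun _ _ => sum_comm
    _ ≤ ∑ ω₁, ∑ ω₂, if U ω₂ = U ω₁ then (#{ω' | U ω' = U ω₁} : ℝ)⁻¹ else 0 := by
        gcongr with ω₁ _ ω₂ _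
        exact sum_inv_card_fiber_prodMk_le hX hY ω₁ ω₂
    _ = ∑ _ω₁ : Ω, (1 : ℝ) := by
        refine sum_congr rfl fun ω₁ _ => ?_
        rw [← sum_filter, sum_const, nsmul_eq_mul, mul_inv_cancel₀ (card_fiber_pos U ω₁).ne']
    _ = Fintype.card Ω := by simp

lemma fiberLogSum_add_le [DecidableEq γ] {X : Ω → α} {Y : Ω → β} {U : Ω → γ}
    (hX : U.FactorsThrough X) (hY : U.FactorsThrough Y) :
    fiberLogSum X + fiberLogSum Y ≤ fiberLogSum (fun ω => (X ω, Y ω)) + fiberLogSum U := by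
  have hP (ω : Ω) : (0 : ℝ) < #{ω' | (X ω', Y ω') = (X ω, Y ω)} :=
    card_fiber_pos (fun ω => (X ω, Y ω)) ω
  have hgibbs := sum_log_nonpos_of_sum_le_card univ
    (r := fun ω => (#{ω' | X ω' = X ω} : ℝ) * #{ω' | Y ω' = Y ω} *
      ((#{ω' | (X ω', Y ω') = (X ω, Y ω)} : ℝ) * #{ω' | U ω' = U ω})⁻¹)
    (fun ω _ => by
      have := card_fiber_pos X ω; have := card_fiber_pos Y ω; have := card_fiber_pos U ω
      have := hP ω; positivity)
    (by simpa only [card_univ] using sum_card_fiber_mul_div_le hX hY)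
  have hlog (ω : Ω) : Real.log ((#{ω' | X ω' = X ω} : ℝ) * #{ω' | Y ω' = Y ω} *
      ((#{ω' | (X ω', Y ω') = (X ω, Y ω)} : ℝ) * #{ω' | U ω' = U ω})⁻¹) =
      Real.log #{ω' | X ω' = X ω} + Real.log #{ω' | Y ω' = Y ω} -
        Real.log #{ω' | (X ω', Y ω') = (X ω, Y ω)} - Real.log #{ω' | U ω' = U ω} := by
    have := card_fiber_pos X ω; have := card_fiber_pos Y ω; have := card_fiber_pos U ω
    have := hP ω
    rw [Real.log_mul (by positivity) (by positivity), Real.log_mul (by positivity) (by positivity),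
      Real.log_inv, Real.log_mul (by positivity) (by positivity)]
    ring
  simp only [hlog, sum_sub_distrib, sum_add_distrib] at hgibbs
  simp only [fiberLogSum]
  linarith

end FiberLogSum

namespace MLDRCode

section General

variable {n Kd K : ℕ} {N : Fin (n - 1) → ℕ} (C : MLDRCode n N Kd K)

def incoming (j : Fin n) (m : (k : Fin (n - 1)) → Fin (N k)) : {i : Fin n // i ≠ j} → Fin K :=
  fun i => C.repEnc i j (C.enc i m)

lemma enc_factorsThrough_incoming (j : Fin n) : (C.enc j).FactorsThrough (C.incoming j) :=
  fun m m' h => by rw [← C.repair j m, ← C.repair j m']; exact congrArg (C.repDec j) h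

lemma apply_eq_of_forall_enc_eq {A : Finset (Fin n)} (hA : A.Nonempty) (hAn : #A ≤ n - 1)
    {m m' : (k : Fin (n - 1)) → Fin (N k)} (h : ∀ i ∈ A, C.enc i m = C.enc i m')
    {k : Fin (n - 1)} (hk : k < #A) : m k = m' k := by
  rw [← C.reconstruct A hA hAn m k hk, ← C.reconstruct A hA hAn m' k hk]
  congr 1
  funext i
  exact h i i.2

end General

variable {Kd K : ℕ} {N : Fin (3 - 1) → ℕ}

lemma fiberLogSum_apply_zero_le :
    (fiberLogSum fun m : ∀ k, Fin (N k) => m 0) ≤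
      Fintype.card (∀ k, Fin (N k)) * Real.log (N 1) := by
  have hinj : Injective fun m : ∀ k, Fin (N k) => (m 0, m 1) := fun m m' h => by
    simp only [Prod.mk.injEq] at h
    funext k
    fin_cases k
    exacts [h.1, h.2]
  simpa using fiberLogSum_le_of_injective_prodMk _ hinj

section ThreeNodes

variable (C : MLDRCode 3 N Kd K)

lemma apply_zero_factorsThrough_enc (i : Fin 3) :
    (fun m : (k : Fin (3 - 1)) → Fin (N k) => m 0).FactorsThrough (C.enc i) :=
  fun _ _ h => C.apply_eq_of_forall_enc_eq (singleton_nonempty i) (by simp)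
    (fun i' hi' => by rw [mem_singleton.1 hi', h]) (by simp)

lemma injective_enc_prodMk {i j : Fin 3} (hij : i ≠ j) :
    Injective fun m => (C.enc i m, C.enc j m) := fun m m' h => by
  have hcard : #{i, j} = 2 := card_pair hij
  funext k
  refine C.apply_eq_of_forall_enc_eq (insert_nonempty i {j}) hcard.le (fun i' hi' => ?_)
    (hcard ▸ k.isLt)
  rcases mem_insert.1 hi' with rfl | hi'
  · exact congrArg Prod.fst h
  rw [mem_singleton.1 hi']
  exact congrArg Prod.snd h

lemma card_mul_log_sub_le_fiberLogSum_incoming (j : Fin 3) :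
    Fintype.card (∀ k, Fin (N k)) *
      (Real.log (Fintype.card (∀ k, Fin (N k))) - 2 * Real.log K) ≤
    fiberLogSum (C.incoming j) := by
  have hcard : Fintype.card ({i : Fin 3 // i ≠ j} → Fin K) = K ^ 2 := by simp
  simpa [hcard, Real.log_pow] using card_mul_log_sub_log_le_fiberLogSum (C.incoming j)

lemma fiberLogSum_incoming_zero_add_incoming_one_le :
    fiberLogSum (C.incoming 0) + fiberLogSum (C.incoming 1) ≤
      fiberLogSum fun m => (m 0, C.repEnc 0 1 (C.enc 0 m)) := by
  have h₀ := C.enc_factorsThrough_incoming 0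
  have h₁ := C.enc_factorsThrough_incoming 1
  have hinj : Injective fun m => (C.incoming 0 m, C.incoming 1 m) := fun m m' h =>
    C.injective_enc_prodMk (by decide : (0 : Fin 3) ≠ 1)
      (Prod.ext (h₀ (congrArg Prod.fst h)) (h₁ (congrArg Prod.snd h)))
  have hU₀ : (fun m => (m 0, C.repEnc 0 1 (C.enc 0 m))).FactorsThrough (C.incoming 0) :=
    fun m m' h => Prod.ext (C.apply_zero_factorsThrough_enc 0 (h₀ h))
      (congrArg (C.repEnc 0 1) (h₀ h))
  have hU₁ : (fun m => (m 0, C.repEnc 0 1 (C.enc 0 m))).FactorsThrough (C.incoming 1) :=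
    fun m m' h => Prod.ext (C.apply_zero_factorsThrough_enc 1 (h₁ h))
      (congrFun h ⟨0, by decide⟩)
  simpa [fiberLogSum_eq_zero_of_injective hinj] using fiberLogSum_add_le hU₀ hU₁

lemma fiberLogSum_add_enc_two_le :
    (fiberLogSum fun m => (m 0, C.repEnc 0 1 (C.enc 0 m))) + fiberLogSum (C.enc 2) ≤
      fiberLogSum fun m : ∀ k, Fin (N k) => m 0 := by
  have hinj : Injective fun m => ((m 0, C.repEnc 0 1 (C.enc 0 m)), C.enc 2 m) :=
    fun m m' h => by
      simp only [Prod.mk.injEq] at h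
      obtain ⟨⟨-, h₀₁⟩, h₂⟩ := h
      have h₁ : C.enc 1 m = C.enc 1 m' := C.enc_factorsThrough_incoming 1 <|
        funext fun ⟨i, hi⟩ => by
          fin_cases i
          · exact h₀₁
          · exact absurd rfl hi
          · simp [incoming, h₂]
      exact C.injective_enc_prodMk (by decide : (1 : Fin 3) ≠ 2) (Prod.ext h₁ h₂)
  have hU : (fun m : ∀ k, Fin (N k) => m 0).FactorsThrough
      fun m => (m 0, C.repEnc 0 1 (C.enc 0 m)) := fun _ _ h => congrArg Prod.fst h
  simpa [fiberLogSum_eq_zero_of_injective hinj] using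
    fiberLogSum_add_le hU (C.apply_zero_factorsThrough_enc 2)

end ThreeNodes

lemma three_mul_log_card_sub_le (C : MLDRCode 3 N Kd K) (hN : ∀ k, 0 < N k) :
    3 * (Real.log (Fintype.card (∀ k, Fin (N k))) - 2 * Real.log K) ≤ Real.log (N 1) := by
  have : Nonempty (∀ k, Fin (N k)) := ⟨fun k => ⟨0, hN k⟩⟩
  refine le_of_mul_le_mul_left ?_ (Nat.cast_pos.2 (Fintype.card_pos (α := ∀ k, Fin (N k))))
  have h₀ := C.card_mul_log_sub_le_fiberLogSum_incoming 0
  have h₁ := C.card_mul_log_sub_le_fiberLogSum_incoming 1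
  have h₂ := C.card_mul_log_sub_le_fiberLogSum_incoming 2
  have h₂' := fiberLogSum_mono (C.enc_factorsThrough_incoming 2)
  have h₀₁ := C.fiberLogSum_incoming_zero_add_incoming_one_le
  have hU₂ := C.fiberLogSum_add_enc_two_le
  have hM := fiberLogSum_apply_zero_le (N := N)
  linarith

end MLDRCode

theorem mldr3_beta_bound_general (N1 N2 Kd K : ℕ) (hN1 : 0 < N1) (hN2 : 0 < N2)
    (C : MLDRCode 3 ![N1, N2] Kd K) :
    Real.log K ≥ (1 / 2) * Real.log N1 + (1 / 3) * Real.log N2 := by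
  have hN : ∀ k, 0 < ![N1, N2] k := fun k => by fin_cases k <;> assumption
  have hcard : Fintype.card (∀ k, Fin (![N1, N2] k)) = N1 * N2 := by
    simp [Fintype.card_pi, Fin.prod_univ_two]
  have h := C.three_mul_log_card_sub_le hN
  rw [hcard, Nat.cast_mul, Real.log_mul (by positivity) (by positivity)] at h
  simp only [Matrix.cons_val_one, Matrix.cons_val_fin_one] at h
  linarith

/-- **(n = 3) repair-bandwidth bound.** For any `(3; N₁, N₂, K_d, K)` exact-repair MLD-R
code, `log K ≥ (1/2)·log N₁ + (1/3)·log N₂`. -/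
theorem mldr3_beta_bound (N1 N2 Kd K : ℕ) (hN1 : 0 < N1) (hN2 : 0 < N2)
    (hKd : 0 < Kd) (hK : 0 < K)
    (C : MLDRCode 3 ![N1, N2] Kd K) :
    Real.log K ≥ (1 / 2) * Real.log N1 + (1 / 3) * Real.log N2 :=
  mldr3_beta_bound_general N1 N2 Kd K hN1 hN2 C
end

section
/- Let any (3; N_1, N_2, K_d, K) exact-repair MLD-R code (n = 3 nodes, d = 2 messages) be given. Then log K_d + log K ≥ (3/2)·log N_1 + log N_2. -/
/-!
Fix the first message `x`. As the second message `y` varies, node 2 is repaired from the pair of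
repair messages `u(y)` sent by nodes 0 and 1, and decoding from nodes `{0, 2}` or `{1, 2}`
recovers `y`. Hence a collision `u(y) = u(y')` is determined by the contents of node 0 at `y`
and of node 1 at `y'`, so the number of collisions is at most `a_x b_x`, where `a_x`, `b_x` count
the contents of nodes 0 and 1; by Cauchy–Schwarz `N₂² ≤ a_x b_x c_x`, with `c_x` the number of
values of `u`. Since any single node, and the repair messages to node 2, determine `x`, summing
over `x` gives `∑ a_x, ∑ b_x ≤ K_d` and `∑ c_x ≤ K²`, and concavity of `log` turns the
pointwise bound into `N₁³ N₂² ≤ K_d² K²`.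
-/

open Finset

section Collisions

variable {Y Z : Type*} [Fintype Y] [DecidableEq Z]

theorem card_collisions_eq_sum_sq (f : Y → Z) :
    #{p : Y × Y | f p.1 = f p.2} = ∑ z ∈ univ.image f, #{y | f y = z} ^ 2 := by
  rw [card_eq_sum_card_fiberwise (f := fun p => f p.1) fun p _ => mem_image_of_mem f (mem_univ _)]
  refine sum_congr rfl fun z _ => ?_
  rw [sq, ← card_product]
  congr 1
  ext ⟨y, y'⟩
  simp only [mem_filter, mem_univ, true_and, mem_product]
  constructor
  · rintro ⟨h, rfl⟩
    exact ⟨rfl, h.symm⟩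
  · rintro ⟨h, h'⟩
    exact ⟨h.trans h'.symm, h⟩

theorem sq_card_le_card_image_mul_card_collisions (f : Y → Z) :
    Fintype.card Y ^ 2 ≤ #(univ.image f) * #{p : Y × Y | f p.1 = f p.2} := by
  rw [card_collisions_eq_sum_sq, ← card_univ, card_eq_sum_card_image f univ]
  exact sq_sum_le_card_mul_sum_sq

theorem card_collisions_le_card_image_mul_card_image {α β γ δ : Type*} [DecidableEq α]
    [DecidableEq β] [DecidableEq γ] [DecidableEq δ] (w₀ : Y → α) (w₁ : Y → β) (r₀ : α → γ)
    (r₁ : β → δ) (h₀ : Function.Injective fun y => (w₀ y, r₁ (w₁ y)))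
    (h₁ : Function.Injective fun y => (r₀ (w₀ y), w₁ y)) :
    #{p : Y × Y | (r₀ (w₀ p.1), r₁ (w₁ p.1)) = (r₀ (w₀ p.2), r₁ (w₁ p.2))} ≤
      #(univ.image w₀) * #(univ.image w₁) := by
  rw [← card_product]
  refine card_le_card_of_injOn (fun p => (w₀ p.1, w₁ p.2)) (fun p _ => ?_) ?_
  · simp only [coe_product, coe_image, coe_univ, Set.image_univ, Set.mem_prod, Set.mem_range,
      exists_apply_eq_apply, and_self]
  · rintro ⟨y, y'⟩ hy ⟨q, q'⟩ hq h
    simp only [coe_filter, mem_univ, true_and, Set.mem_ofPred_eq, Prod.mk.injEq] at hy hq h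
    have hyq : y = q := h₀ (Prod.ext h.1 (show r₁ (w₁ y) = r₁ (w₁ q) by rw [hy.2, h.2, ← hq.2]))
    have hyq' : y' = q' :=
      h₁ (Prod.ext (show r₀ (w₀ y') = r₀ (w₀ q') by rw [← hy.1, h.1, hq.1]) h.2)
    rw [hyq, hyq']

end Collisions

theorem sum_card_image_le_card {X Y Z : Type*} [Fintype X] [Fintype Y] [Fintype Z]
    [DecidableEq Z] (f : X → Y → Z) (hf : ∀ x x' y y', f x y = f x' y' → x = x') :
    ∑ x, #(univ.image (f x)) ≤ Fintype.card Z := by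
  rw [← card_biUnion]
  · exact card_le_univ _
  · intro x _ x' _ hxx'
    simp only [Function.onFun, disjoint_left, mem_image, mem_univ, true_and]
    rintro _ ⟨y, rfl⟩ ⟨y', hy'⟩
    exact hxx' (hf _ _ _ _ hy'.symm)

theorem sum_log_le_card_mul_log_sum_div {ι : Type*} {s : Finset ι} (hs : s.Nonempty)
    {a : ι → ℝ} (ha : ∀ i ∈ s, 0 < a i) :
    ∑ i ∈ s, Real.log (a i) ≤ #s * Real.log ((∑ i ∈ s, a i) / #s) := by
  have hcard : (0 : ℝ) < #s := by exact_mod_cast hs.card_pos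
  have jensen := strictConcaveOn_log_Ioi.concaveOn.le_map_sum (t := s)
    (w := fun _ => (#s : ℝ)⁻¹) (p := a) (fun _ _ => by positivity)
    (by rw [sum_const, nsmul_eq_mul, mul_inv_cancel₀ hcard.ne']) ha
  simp only [smul_eq_mul, inv_mul_eq_div, ← sum_div] at jensen
  rwa [div_le_iff₀' hcard] at jensen

theorem sum_log_le_card_mul_log_sub_log_card {ι : Type*} [Fintype ι] [Nonempty ι] {f : ι → ℝ}
    {F : ℝ} (hf : ∀ i, 0 < f i) (hF : ∑ i, f i ≤ F) :
    ∑ i, Real.log (f i) ≤ Fintype.card ι * (Real.log F - Real.log (Fintype.card ι)) := by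
  have hcard : (0 : ℝ) < Fintype.card ι := by exact_mod_cast Fintype.card_pos
  have hsum : 0 < ∑ i, f i := sum_pos (fun i _ => hf i) univ_nonempty
  calc ∑ i, Real.log (f i) ≤ #univ * Real.log ((∑ i, f i) / #univ) :=
        sum_log_le_card_mul_log_sum_div univ_nonempty fun i _ => hf i
    _ ≤ Fintype.card ι * Real.log (F / Fintype.card ι) := by
        rw [card_univ]
        gcongr
    _ = Fintype.card ι * (Real.log F - Real.log (Fintype.card ι)) := by
        rw [Real.log_div (hsum.trans_le hF).ne' hcard.ne']

theorem three_mul_log_card_add_log_le {ι : Type*} [Fintype ι] [Nonempty ι] {a b c : ι → ℝ}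
    {t A B C : ℝ} (ht : 0 < t) (ha : ∀ i, 0 ≤ a i) (hb : ∀ i, 0 ≤ b i) (hc : ∀ i, 0 ≤ c i)
    (habc : ∀ i, t ≤ a i * b i * c i) (hA : ∑ i, a i ≤ A) (hB : ∑ i, b i ≤ B)
    (hC : ∑ i, c i ≤ C) :
    3 * Real.log (Fintype.card ι) + Real.log t ≤ Real.log A + Real.log B + Real.log C := by
  have hcard : (0 : ℝ) < Fintype.card ι := by exact_mod_cast Fintype.card_pos
  have hpos : ∀ i, 0 < a i ∧ 0 < b i ∧ 0 < c i := by
    intro i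
    have hprod := ht.trans_le (habc i)
    refine ⟨(ha i).lt_of_ne ?_, (hb i).lt_of_ne ?_, (hc i).lt_of_ne ?_⟩ <;>
      rintro hzero <;> simp [← hzero] at hprod
  have pointwise (i : ι) : Real.log t ≤ Real.log (a i) + Real.log (b i) + Real.log (c i) := by
    obtain ⟨hai, hbi, hci⟩ := hpos i
    rw [← Real.log_mul hai.ne' hbi.ne', ← Real.log_mul (by positivity) hci.ne']
    exact Real.log_le_log ht (habc i)
  have summed := sum_le_sum fun i (_ : i ∈ univ) => pointwise i
  rw [sum_const, card_univ, nsmul_eq_mul, sum_add_distrib, sum_add_distrib] at summed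
  have hla := sum_log_le_card_mul_log_sub_log_card (fun i => (hpos i).1) hA
  have hlb := sum_log_le_card_mul_log_sub_log_card (fun i => (hpos i).2.1) hB
  have hlc := sum_log_le_card_mul_log_sub_log_card (fun i => (hpos i).2.2) hC
  refine le_of_mul_le_mul_left ?_ hcard
  linarith

namespace MLDRCode

section

variable {n : ℕ} {N : Fin (n - 1) → ℕ} {Kd K : ℕ} (C : MLDRCode n N Kd K)

theorem dec_congr {A : Finset (Fin n)} {m m' : (k : Fin (n - 1)) → Fin (N k)}
    (h : ∀ i ∈ A, C.enc i m = C.enc i m') :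
    C.dec A (fun i => C.enc i m) = C.dec A (fun i => C.enc i m') := by
  congr 1
  funext i
  exact h i i.2

end

variable {N₁ N₂ Kd K : ℕ} (C : MLDRCode 3 ![N₁, N₂] Kd K)

theorem apply_zero_eq_of_enc_eq (i : Fin 3) {m m' : (k : Fin (3 - 1)) → Fin (![N₁, N₂] k)}
    (h : C.enc i m = C.enc i m') : m 0 = m' 0 := by
  have recon := fun m => C.reconstruct {i} (singleton_nonempty i) (by simp) m 0 (by simp)
  rw [← recon m, ← recon m', C.dec_congr (by simpa using h)]

theorem eq_of_enc_eq_of_enc_eq {i j : Fin 3} (hij : i ≠ j)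
    {m m' : (k : Fin (3 - 1)) → Fin (![N₁, N₂] k)} (hi : C.enc i m = C.enc i m')
    (hj : C.enc j m = C.enc j m') : m = m' := by
  have hcard : #{i, j} = 2 := card_pair hij
  have recon := fun m k => C.reconstruct {i, j} (insert_nonempty i {j}) hcard.le m k
    (hcard ▸ k.isLt)
  funext k
  rw [← recon m k, ← recon m' k, C.dec_congr (m := m) (m' := m') (by simp [hi, hj])]

def repairMsgsToTwo (m : (k : Fin (3 - 1)) → Fin (![N₁, N₂] k)) : Fin K × Fin K :=
  (C.repEnc 0 2 (C.enc 0 m), C.repEnc 1 2 (C.enc 1 m))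

theorem enc_two_eq_of_repairMsgsToTwo_eq {m m' : (k : Fin (3 - 1)) → Fin (![N₁, N₂] k)}
    (h : C.repairMsgsToTwo m = C.repairMsgsToTwo m') : C.enc 2 m = C.enc 2 m' := by
  rw [← C.repair 2 m, ← C.repair 2 m']
  congr 1
  funext ⟨i, hi⟩
  simp only [repairMsgsToTwo, Prod.mk.injEq] at h
  fin_cases i
  exacts [h.1, h.2, absurd rfl hi]

def msgPair (x : Fin N₁) (y : Fin N₂) : (k : Fin (3 - 1)) → Fin (![N₁, N₂] k) :=
  Fin.cons x (Fin.cons y finZeroElim)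

theorem msgPair_injective (x : Fin N₁) : Function.Injective (msgPair (N₂ := N₂) x) :=
  fun _ _ h => congrFun h 1

theorem sum_card_image_enc_le (i : Fin 3) :
    ∑ x, #(univ.image fun y => C.enc i (msgPair x y)) ≤ Kd := by
  simpa using sum_card_image_le_card (fun x y => C.enc i (msgPair x y))
    fun _ _ _ _ h => C.apply_zero_eq_of_enc_eq i h

theorem sum_card_image_repairMsgsToTwo_le :
    ∑ x, #(univ.image fun y => C.repairMsgsToTwo (msgPair x y)) ≤ K ^ 2 := by
  simpa [sq] using sum_card_image_le_card (fun x y => C.repairMsgsToTwo (msgPair x y))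
    fun _ _ _ _ h => C.apply_zero_eq_of_enc_eq 2 (C.enc_two_eq_of_repairMsgsToTwo_eq h)

theorem eq_of_enc_zero_eq_of_repEnc_one_eq {m m' : (k : Fin (3 - 1)) → Fin (![N₁, N₂] k)}
    (h₀ : C.enc 0 m = C.enc 0 m') (h₁ : C.repEnc 1 2 (C.enc 1 m) = C.repEnc 1 2 (C.enc 1 m')) :
    m = m' :=
  C.eq_of_enc_eq_of_enc_eq (by decide) h₀
    (C.enc_two_eq_of_repairMsgsToTwo_eq (Prod.ext (congrArg (C.repEnc 0 2) h₀) h₁))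

theorem eq_of_repEnc_zero_eq_of_enc_one_eq {m m' : (k : Fin (3 - 1)) → Fin (![N₁, N₂] k)}
    (h₀ : C.repEnc 0 2 (C.enc 0 m) = C.repEnc 0 2 (C.enc 0 m')) (h₁ : C.enc 1 m = C.enc 1 m') :
    m = m' :=
  C.eq_of_enc_eq_of_enc_eq (by decide) h₁
    (C.enc_two_eq_of_repairMsgsToTwo_eq (Prod.ext h₀ (congrArg (C.repEnc 1 2) h₁)))

theorem sq_le_card_image_mul_card_image_mul_card_image (x : Fin N₁) :
    N₂ ^ 2 ≤ #(univ.image fun y => C.enc 0 (msgPair x y)) *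
      #(univ.image fun y => C.enc 1 (msgPair x y)) *
      #(univ.image fun y => C.repairMsgsToTwo (msgPair x y)) := by
  have collisions := card_collisions_le_card_image_mul_card_image
    (fun y => C.enc 0 (msgPair x y)) (fun y => C.enc 1 (msgPair x y)) (C.repEnc 0 2) (C.repEnc 1 2)
    (fun _ _ h => msgPair_injective x
      (C.eq_of_enc_zero_eq_of_repEnc_one_eq (congrArg Prod.fst h) (congrArg Prod.snd h)))
    (fun _ _ h => msgPair_injective x
      (C.eq_of_repEnc_zero_eq_of_enc_one_eq (congrArg Prod.fst h) (congrArg Prod.snd h)))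
  calc N₂ ^ 2 = Fintype.card (Fin N₂) ^ 2 := by rw [Fintype.card_fin]
    _ ≤ _ := sq_card_le_card_image_mul_card_collisions fun y => C.repairMsgsToTwo (msgPair x y)
    _ ≤ _ := Nat.mul_le_mul_left _ collisions
    _ = _ := by ring

end MLDRCode

theorem mldr3_alpha_beta_bound_general (N1 N2 Kd K : ℕ) (hN1 : 0 < N1) (hN2 : 0 < N2)
    (C : MLDRCode 3 ![N1, N2] Kd K) :
    Real.log Kd + Real.log K ≥ (3 / 2) * Real.log N1 + Real.log N2 := by
  have : Nonempty (Fin N1) := ⟨⟨0, hN1⟩⟩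
  have key := three_mul_log_card_add_log_le (t := (N2 : ℝ) ^ 2) (A := Kd) (B := Kd)
    (C := (K : ℝ) ^ 2) (by positivity)
    (fun _ => Nat.cast_nonneg _) (fun _ => Nat.cast_nonneg _) (fun _ => Nat.cast_nonneg _)
    (fun x => by exact_mod_cast C.sq_le_card_image_mul_card_image_mul_card_image x)
    (by exact_mod_cast C.sum_card_image_enc_le 0) (by exact_mod_cast C.sum_card_image_enc_le 1)
    (by exact_mod_cast C.sum_card_image_repairMsgsToTwo_le)
  rw [Fintype.card_fin, Real.log_pow, Real.log_pow] at key
  push_cast at key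
  linarith

/-- **(n = 3) sum bound.** For any `(3; N₁, N₂, K_d, K)` exact-repair MLD-R code,
`log K_d + log K ≥ (3/2)·log N₁ + log N₂`. -/
theorem mldr3_alpha_beta_bound (N1 N2 Kd K : ℕ) (hN1 : 0 < N1) (hN2 : 0 < N2)
    (hKd : 0 < Kd) (hK : 0 < K)
    (C : MLDRCode 3 ![N1, N2] Kd K) :
    Real.log Kd + Real.log K ≥ (3 / 2) * Real.log N1 + Real.log N2 :=
  mldr3_alpha_beta_bound_general N1 N2 Kd K hN1 hN2 C
end

section
/- There exists a (4; 1, 16^3, 16^6, 16^4, 16^2) exact-repair MLD-R code. Equivalently: with four nodes, message alphabet sizes N_1 = 1, N_2 = 16^3, N_3 = 16^6 (i.e., M_2 a vector in GF(16)^3 and M_3 a vector in GF(16)^6), there exist node encoders storing 4 symbols of GF(16) per node and repair encoders sending 2 symbols of GF(16) per helper node, together with the corresponding decoders and repair decoders, such that the stored contents of any 2 nodes determine M_2, the stored contents of any 3 nodes determine (M_2, M_3), and each node's stored content is exactly determined by the repair messages sent to it by the other 3 nodes. (This achieves the normalized operating point (ᾱ, β̄) = (4/9, 2/9) for message rates (B̄_1,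 B̄_2, B̄_3) = (0, 1/3, 2/3).) -/
namespace MLDRAux

abbrev S := Fin 16

/-- xor on `Fin 16` -/
def xo (a b : S) : S := ⟨a.val ^^^ b.val, Nat.xor_lt_two_pow (n := 4) a.isLt b.isLt⟩

lemma xo_aab (a b : S) : xo a (xo a b) = b := by
  apply Fin.ext
  show a.val ^^^ (a.val ^^^ b.val) = b.val
  rw [← Nat.xor_assoc, Nat.xor_self, Nat.zero_xor]

lemma xo_comm (a b : S) : xo a b = xo b a := by
  apply Fin.ext; exact Nat.xor_comm _ _

lemma xo_cancel_left {a b c : S} (h : xo a b = xo a c) : b = c := by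
  have h2 := congrArg (xo a) h
  rwa [xo_aab, xo_aab] at h2

lemma xo_cancel_right {a b c : S} (h : xo b a = xo c a) : b = c := by
  rw [xo_comm b, xo_comm c] at h; exact xo_cancel_left h

/-- node contents table: `symInner x w i r` is the `r`-th symbol stored on node `i`,
where `x : Fin 3 → S` is the second message and `w : Fin 6 → S` the third message
(indexed by the edges 01,02,03,12,13,23 of `K₄`). -/
def symInner (x : Fin 3 → S) (w : Fin 6 → S) (i r : Fin 4) : S :=
  match i.val, r.val with
  | 0, 0 => x 0
  | 0, 1 => w 0
  | 0, 2 => w 1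
  | 0, 3 => w 2
  | 1, 0 => x 1
  | 1, 1 => xo (w 0) (x 2)
  | 1, 2 => w 3
  | 1, 3 => w 4
  | 2, 0 => x 2
  | 2, 1 => xo (w 1) (x 1)
  | 2, 2 => xo (w 3) (x 0)
  | 2, 3 => w 5
  | 3, 0 => xo (x 0) (xo (x 1) (x 2))
  | 3, 1 => xo (w 2) (x 1)
  | 3, 2 => xo (w 4) (x 0)
  | 3, 3 => xo (w 5) (x 0)
  | _, _ => 0

section XW
variable {x x' : Fin 3 → S} {w w' : Fin 6 → S}

lemma xfun (h0 : x 0 = x' 0) (h1 : x 1 = x' 1) (h2 : x 2 = x' 2) : x = x' := by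
  funext k; fin_cases k <;> assumption

lemma T013 (h0 : x 0 = x' 0) (h1 : x 1 = x' 1)
    (h3 : xo (x 0) (xo (x 1) (x 2)) = xo (x' 0) (xo (x' 1) (x' 2))) : x = x' := by
  rw [h0, h1] at h3
  exact xfun h0 h1 (xo_cancel_left (xo_cancel_left h3))

lemma T023 (h0 : x 0 = x' 0) (h2 : x 2 = x' 2)
    (h3 : xo (x 0) (xo (x 1) (x 2)) = xo (x' 0) (xo (x' 1) (x' 2))) : x = x' := by
  rw [h0, h2] at h3
  exact xfun h0 (xo_cancel_right (xo_cancel_left h3)) h2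

lemma T123 (h1 : x 1 = x' 1) (h2 : x 2 = x' 2)
    (h3 : xo (x 0) (xo (x 1) (x 2)) = xo (x' 0) (xo (x' 1) (x' 2))) : x = x' := by
  rw [h1, h2] at h3
  exact xfun (xo_cancel_right h3) h1 h2

/-- pair lemmas: contents of two nodes determine `x` -/
lemma P01 (h0 : ∀ r, symInner x w 0 r = symInner x' w' 0 r)
    (h1 : ∀ r, symInner x w 1 r = symInner x' w' 1 r) : x = x' := by
  have a0 : x 0 = x' 0 := h0 0
  have a1 : x 1 = x' 1 := h1 0
  have e0 : w 0 = w' 0 := h0 1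
  have e1 : xo (w 0) (x 2) = xo (w' 0) (x' 2) := h1 1
  rw [e0] at e1
  exact xfun a0 a1 (xo_cancel_left e1)

lemma P02 (h0 : ∀ r, symInner x w 0 r = symInner x' w' 0 r)
    (h2 : ∀ r, symInner x w 2 r = symInner x' w' 2 r) : x = x' := by
  have a0 : x 0 = x' 0 := h0 0
  have a2 : x 2 = x' 2 := h2 0
  have e0 : w 1 = w' 1 := h0 2
  have e1 : xo (w 1) (x 1) = xo (w' 1) (x' 1) := h2 1
  rw [e0] at e1
  exact xfun a0 (xo_cancel_left e1) a2

lemma P03 (h0 : ∀ r, symInner x w 0 r = symInner x' w' 0 r)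
    (h3 : ∀ r, symInner x w 3 r = symInner x' w' 3 r) : x = x' := by
  have a0 : x 0 = x' 0 := h0 0
  have t3 : xo (x 0) (xo (x 1) (x 2)) = xo (x' 0) (xo (x' 1) (x' 2)) := h3 0
  have e0 : w 2 = w' 2 := h0 3
  have e1 : xo (w 2) (x 1) = xo (w' 2) (x' 1) := h3 1
  rw [e0] at e1
  exact T013 a0 (xo_cancel_left e1) t3

lemma P12 (h1 : ∀ r, symInner x w 1 r = symInner x' w' 1 r)
    (h2 : ∀ r, symInner x w 2 r = symInner x' w' 2 r) : x = x' := by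
  have a1 : x 1 = x' 1 := h1 0
  have a2 : x 2 = x' 2 := h2 0
  have e0 : w 3 = w' 3 := h1 2
  have e1 : xo (w 3) (x 0) = xo (w' 3) (x' 0) := h2 2
  rw [e0] at e1
  exact xfun (xo_cancel_left e1) a1 a2

lemma P13 (h1 : ∀ r, symInner x w 1 r = symInner x' w' 1 r)
    (h3 : ∀ r, symInner x w 3 r = symInner x' w' 3 r) : x = x' := by
  have a1 : x 1 = x' 1 := h1 0
  have t3 : xo (x 0) (xo (x 1) (x 2)) = xo (x' 0) (xo (x' 1) (x' 2)) := h3 0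
  have e0 : w 4 = w' 4 := h1 3
  have e1 : xo (w 4) (x 0) = xo (w' 4) (x' 0) := h3 2
  rw [e0] at e1
  exact T013 (xo_cancel_left e1) a1 t3

lemma P23 (h2 : ∀ r, symInner x w 2 r = symInner x' w' 2 r)
    (h3 : ∀ r, symInner x w 3 r = symInner x' w' 3 r) : x = x' := by
  have a2 : x 2 = x' 2 := h2 0
  have t3 : xo (x 0) (xo (x 1) (x 2)) = xo (x' 0) (xo (x' 1) (x' 2)) := h3 0
  have e0 : w 5 = w' 5 := h2 3
  have e1 : xo (w 5) (x 0) = xo (w' 5) (x' 0) := h3 3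
  rw [e0] at e1
  exact T023 (xo_cancel_left e1) a2 t3

/-- generic pair lemma -/
lemma pairX (i j : Fin 4) (hij : i ≠ j)
    (hi : ∀ r, symInner x w i r = symInner x' w' i r)
    (hj : ∀ r, symInner x w j r = symInner x' w' j r) : x = x' := by
  fin_cases i <;> fin_cases j <;>
    first
      | exact absurd rfl hij
      | exact P01 hi hj | exact P01 hj hi
      | exact P02 hi hj | exact P02 hj hi
      | exact P03 hi hj | exact P03 hj hi
      | exact P12 hi hj | exact P12 hj hi
      | exact P13 hi hj | exact P13 hj hi
      | exact P23 hi hj | exact P23 hj hi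

/-- edge stored in slot `s+1` of node `a` -/
def eOf (a : Fin 4) (s : Fin 3) : Fin 6 :=
  match a.val, s.val with
  | 0, 0 => 0 | 0, 1 => 1 | 0, 2 => 2
  | 1, 0 => 0 | 1, 1 => 3 | 1, 2 => 4
  | 2, 0 => 1 | 2, 1 => 3 | 2, 2 => 5
  | 3, 0 => 2 | 3, 1 => 4 | 3, 2 => 5
  | _, _ => 0

def slotOf (s : Fin 3) : Fin 4 := ⟨s.val + 1, by omega⟩

lemma wslot (hx : x = x') (a : Fin 4) (s : Fin 3)
    (hr : symInner x w a (slotOf s) = symInner x' w' a (slotOf s)) :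
    w (eOf a s) = w' (eOf a s) := by
  subst hx
  fin_cases a <;> fin_cases s <;>
    first
      | exact hr
      | exact xo_cancel_right hr

lemma cover (i j k : Fin 4) (hij : i ≠ j) (hik : i ≠ k) (hjk : j ≠ k) (e : Fin 6) :
    ∃ a s, (a = i ∨ a = j ∨ a = k) ∧ eOf a s = e := by
  revert hij hik hjk; revert e; revert i j k; decide

/-- generic triple lemma: `w` part -/
lemma tripleW (i j k : Fin 4) (hij : i ≠ j) (hik : i ≠ k) (hjk : j ≠ k)
    (hi : ∀ r, symInner x w i r = symInner x' w' i r)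
    (hj : ∀ r, symInner x w j r = symInner x' w' j r)
    (hk : ∀ r, symInner x w k r = symInner x' w' k r) : w = w' := by
  have hx : x = x' := pairX i j hij hi hj
  funext e
  obtain ⟨a, s, ha, he⟩ := cover i j k hij hik hjk e
  rw [← he]
  rcases ha with rfl | rfl | rfl
  · exact wslot hx a s (hi (slotOf s))
  · exact wslot hx a s (hj (slotOf s))
  · exact wslot hx a s (hk (slotOf s))

/-- repair lemmas: node `j`'s contents from the repair symbols. The hypotheses are:
the `t`-symbols (slot 0) of the three helpers, and the edge-row of each helper towards `j`. -/
lemma R0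
    (t1 : symInner x w 1 0 = symInner x' w' 1 0)
    (t2 : symInner x w 2 0 = symInner x' w' 2 0)
    (t3 : symInner x w 3 0 = symInner x' w' 3 0)
    (r1 : symInner x w 1 1 = symInner x' w' 1 1)
    (r2 : symInner x w 2 1 = symInner x' w' 2 1)
    (r3 : symInner x w 3 1 = symInner x' w' 3 1) :
    ∀ r, symInner x w 0 r = symInner x' w' 0 r := by
  have hx : x = x' := T123 t1 t2 t3
  subst hx
  have e0 : w 0 = w' 0 := xo_cancel_right r1
  have e1 : w 1 = w' 1 := xo_cancel_right r2
  have e2 : w 2 = w' 2 := xo_cancel_right r3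
  intro r
  fin_cases r
  · rfl
  · exact e0
  · exact e1
  · exact e2

lemma R1
    (t0 : symInner x w 0 0 = symInner x' w' 0 0)
    (t2 : symInner x w 2 0 = symInner x' w' 2 0)
    (t3 : symInner x w 3 0 = symInner x' w' 3 0)
    (r0 : symInner x w 0 1 = symInner x' w' 0 1)
    (r2 : symInner x w 2 2 = symInner x' w' 2 2)
    (r3 : symInner x w 3 2 = symInner x' w' 3 2) :
    ∀ r, symInner x w 1 r = symInner x' w' 1 r := by
  have hx : x = x' := T023 t0 t2 t3
  subst hx
  have e0 : w 0 = w' 0 := r0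
  have e3 : w 3 = w' 3 := xo_cancel_right r2
  have e4 : w 4 = w' 4 := xo_cancel_right r3
  intro r
  fin_cases r
  · rfl
  · show xo (w 0) (x 2) = xo (w' 0) (x 2); rw [e0]
  · exact e3
  · exact e4

lemma R2
    (t0 : symInner x w 0 0 = symInner x' w' 0 0)
    (t1 : symInner x w 1 0 = symInner x' w' 1 0)
    (t3 : symInner x w 3 0 = symInner x' w' 3 0)
    (r0 : symInner x w 0 2 = symInner x' w' 0 2)
    (r1 : symInner x w 1 2 = symInner x' w' 1 2)
    (r3 : symInner x w 3 3 = symInner x' w' 3 3) :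
    ∀ r, symInner x w 2 r = symInner x' w' 2 r := by
  have hx : x = x' := T013 t0 t1 t3
  subst hx
  have e1 : w 1 = w' 1 := r0
  have e3 : w 3 = w' 3 := r1
  have e5 : w 5 = w' 5 := xo_cancel_right r3
  intro r
  fin_cases r
  · rfl
  · show xo (w 1) (x 1) = xo (w' 1) (x 1); rw [e1]
  · show xo (w 3) (x 0) = xo (w' 3) (x 0); rw [e3]
  · exact e5

lemma R3
    (t0 : symInner x w 0 0 = symInner x' w' 0 0)
    (t1 : symInner x w 1 0 = symInner x' w' 1 0)
    (t2 : symInner x w 2 0 = symInner x' w' 2 0)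
    (r0 : symInner x w 0 3 = symInner x' w' 0 3)
    (r1 : symInner x w 1 3 = symInner x' w' 1 3)
    (r2 : symInner x w 2 3 = symInner x' w' 2 3) :
    ∀ r, symInner x w 3 r = symInner x' w' 3 r := by
  have hx : x = x' := xfun t0 t1 t2
  subst hx
  have e2 : w 2 = w' 2 := r0
  have e4 : w 4 = w' 4 := r1
  have e5 : w 5 = w' 5 := r2
  intro r
  fin_cases r
  · rfl
  · show xo (w 2) (x 1) = xo (w' 2) (x 1); rw [e2]
  · show xo (w 4) (x 0) = xo (w' 4) (x 0); rw [e4]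
  · show xo (w 5) (x 0) = xo (w' 5) (x 0); rw [e5]

end XW

end MLDRAux

namespace MLDRAux

abbrev Msg := (k : Fin (4 - 1)) → Fin ((![1, 16 ^ 3, 16 ^ 6] : Fin (4-1) → ℕ) k)

def mx (m : Msg) : Fin 3 → S := finFunctionFinEquiv.symm (m 1)
def mw (m : Msg) : Fin 6 → S := finFunctionFinEquiv.symm (m 2)

def encv (m : Msg) (i : Fin 4) : Fin 4 → S := fun r => symInner (mx m) (mw m) i r

def enc (i : Fin 4) (m : Msg) : Fin (16 ^ 4) := finFunctionFinEquiv (encv m i)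

/-- slot of node `i` holding the edge-row towards `j` (diagonal: dummy) -/
def rp (i j : Fin 4) : Fin 4 :=
  match i.val, j.val with
  | 0, 1 => 1 | 0, 2 => 2 | 0, 3 => 3
  | 1, 0 => 1 | 1, 2 => 2 | 1, 3 => 3
  | 2, 0 => 1 | 2, 1 => 2 | 2, 3 => 3
  | 3, 0 => 1 | 3, 1 => 2 | 3, 2 => 3
  | _, _ => 0

def repEnc (i j : Fin 4) (wd : Fin (16 ^ 4)) : Fin (16 ^ 2) :=
  finFunctionFinEquiv (fun r : Fin 2 =>
    if r.val = 0 then finFunctionFinEquiv.symm wd 0 else finFunctionFinEquiv.symm wd (rp i j))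

lemma repEnc_enc (i j : Fin 4) (m : Msg) :
    repEnc i j (enc i m) = finFunctionFinEquiv (fun r : Fin 2 =>
      if r.val = 0 then encv m i 0 else encv m i (rp i j)) := by
  unfold repEnc enc
  rw [Equiv.symm_apply_apply]

def mdef : Msg := fun k => ⟨0, by fin_cases k <;> norm_num⟩

open Classical in
noncomputable def dec (A : Finset (Fin 4)) (wv : (i : A) → Fin (16 ^ 4)) : Msg :=
  if h : ∃ m : Msg, (fun i : A => enc i.1 m) = wv then h.choose else mdef

open Classical in
noncomputable def repDec (j : Fin 4) (rv : (i : {i : Fin 4 // i ≠ j}) → Fin (16 ^ 2)) :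
    Fin (16 ^ 4) :=
  if h : ∃ m : Msg, (fun i : {i : Fin 4 // i ≠ j} => repEnc i.1 j (enc i.1 m)) = rv
  then enc j h.choose else ⟨0, by norm_num⟩

lemma enc_inj_syms {m m' : Msg} (i : Fin 4) (h : enc i m = enc i m') :
    ∀ r, symInner (mx m) (mw m) i r = symInner (mx m') (mw m') i r :=
  fun r => congrFun (finFunctionFinEquiv.injective h) r

lemma mx_eq {m m' : Msg} (h : mx m = mx m') : m 1 = m' 1 :=
  finFunctionFinEquiv.symm.injective h

lemma mw_eq {m m' : Msg} (h : mw m = mw m') : m 2 = m' 2 :=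
  finFunctionFinEquiv.symm.injective h

end MLDRAux

/-- **Proposition 3 (a new code).** There exists a `(4; 1, 16³, 16⁶, 16⁴, 16²)` exact-repair
MLD-R code: four nodes, a degenerate first message, `M₂ ∈ GF(16)³`, `M₃ ∈ GF(16)⁶`,
each node storing `4` symbols of `GF(16)` and each helper node sending `2` symbols of
`GF(16)` for repair.  This achieves the normalized operating point
`(ᾱ, β̄) = (4/9, 2/9)` for message rates `(B̄₁, B̄₂, B̄₃) = (0, 1/3, 2/3)`. -/
theorem mldr4_new_code_exists :
    Nonempty (MLDRCode 4 ![1, 16 ^ 3, 16 ^ 6] (16 ^ 4) (16 ^ 2)) := by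
  refine ⟨{ enc := fun i m => MLDRAux.enc i m
            dec := MLDRAux.dec
            repEnc := MLDRAux.repEnc
            repDec := MLDRAux.repDec
            reconstruct := ?_
            repair := ?_ }⟩
  · -- reconstruction
    intro A hA hcard m k hk
    have hex : ∃ m'' : MLDRAux.Msg,
        (fun i : A => MLDRAux.enc i.1 m'') = (fun i : A => MLDRAux.enc i.1 m) := ⟨m, rfl⟩
    simp only [MLDRAux.dec]
    rw [dif_pos hex]
    have hspec := hex.choose_spec
    fin_cases k
    · exact Subsingleton.elim (α := Fin 1) _ _
    · -- k = 1 : recover M₂ from two nodes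
      obtain ⟨i, hi, j, hj, hij⟩ := Finset.one_lt_card.mp hk
      have ei : MLDRAux.enc i hex.choose = MLDRAux.enc i m := congrFun hspec ⟨i, hi⟩
      have ej : MLDRAux.enc j hex.choose = MLDRAux.enc j m := congrFun hspec ⟨j, hj⟩
      exact MLDRAux.mx_eq (MLDRAux.pairX i j hij
        (MLDRAux.enc_inj_syms i ei) (MLDRAux.enc_inj_syms j ej))
    · -- k = 2 : recover M₃ from three nodes
      obtain ⟨i, j, l, hi, hj, hl, hij, hil, hjl⟩ := Finset.two_lt_card_iff.mp hk
      have ei : MLDRAux.enc i hex.choose = MLDRAux.enc i m := congrFun hspec ⟨i, hi⟩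
      have ej : MLDRAux.enc j hex.choose = MLDRAux.enc j m := congrFun hspec ⟨j, hj⟩
      have el : MLDRAux.enc l hex.choose = MLDRAux.enc l m := congrFun hspec ⟨l, hl⟩
      exact MLDRAux.mw_eq (MLDRAux.tripleW i j l hij hil hjl
        (MLDRAux.enc_inj_syms i ei) (MLDRAux.enc_inj_syms j ej) (MLDRAux.enc_inj_syms l el))
  · -- exact repair
    intro j m
    have hex : ∃ m'' : MLDRAux.Msg,
        (fun i : {i : Fin 4 // i ≠ j} => MLDRAux.repEnc i.1 j (MLDRAux.enc i.1 m'')) =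
          (fun i : {i : Fin 4 // i ≠ j} => MLDRAux.repEnc i.1 j (MLDRAux.enc i.1 m)) := ⟨m, rfl⟩
    simp only [MLDRAux.repDec]
    rw [dif_pos hex]
    have hspec := hex.choose_spec
    set m' := hex.choose with hm'
    have key : ∀ i : Fin 4, i ≠ j →
        (∀ r : Fin 2, (if r.val = 0 then MLDRAux.encv m' i 0 else MLDRAux.encv m' i (MLDRAux.rp i j)) =
          (if r.val = 0 then MLDRAux.encv m i 0 else MLDRAux.encv m i (MLDRAux.rp i j))) := by
      intro i hi r
      have hh := congrFun hspec ⟨i, hi⟩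
      rw [MLDRAux.repEnc_enc, MLDRAux.repEnc_enc] at hh
      exact congrFun (finFunctionFinEquiv.injective hh) r
    fin_cases j
    · -- j = 0, helpers 1 2 3
      have t1 : MLDRAux.encv m' 1 0 = MLDRAux.encv m 1 0 := key 1 (by decide) 0
      have t2 : MLDRAux.encv m' 2 0 = MLDRAux.encv m 2 0 := key 2 (by decide) 0
      have t3 : MLDRAux.encv m' 3 0 = MLDRAux.encv m 3 0 := key 3 (by decide) 0
      have r1 : MLDRAux.encv m' 1 1 = MLDRAux.encv m 1 1 := key 1 (by decide) 1
      have r2 : MLDRAux.encv m' 2 1 = MLDRAux.encv m 2 1 := key 2 (by decide) 1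
      have r3 : MLDRAux.encv m' 3 1 = MLDRAux.encv m 3 1 := key 3 (by decide) 1
      exact congrArg finFunctionFinEquiv (funext (MLDRAux.R0 t1 t2 t3 r1 r2 r3))
    · -- j = 1, helpers 0 2 3
      have t0 : MLDRAux.encv m' 0 0 = MLDRAux.encv m 0 0 := key 0 (by decide) 0
      have t2 : MLDRAux.encv m' 2 0 = MLDRAux.encv m 2 0 := key 2 (by decide) 0
      have t3 : MLDRAux.encv m' 3 0 = MLDRAux.encv m 3 0 := key 3 (by decide) 0
      have r0 : MLDRAux.encv m' 0 1 = MLDRAux.encv m 0 1 := key 0 (by decide) 1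
      have r2 : MLDRAux.encv m' 2 2 = MLDRAux.encv m 2 2 := key 2 (by decide) 1
      have r3 : MLDRAux.encv m' 3 2 = MLDRAux.encv m 3 2 := key 3 (by decide) 1
      exact congrArg finFunctionFinEquiv (funext (MLDRAux.R1 t0 t2 t3 r0 r2 r3))
    · -- j = 2, helpers 0 1 3
      have t0 : MLDRAux.encv m' 0 0 = MLDRAux.encv m 0 0 := key 0 (by decide) 0
      have t1 : MLDRAux.encv m' 1 0 = MLDRAux.encv m 1 0 := key 1 (by decide) 0
      have t3 : MLDRAux.encv m' 3 0 = MLDRAux.encv m 3 0 := key 3 (by decide) 0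
      have r0 : MLDRAux.encv m' 0 2 = MLDRAux.encv m 0 2 := key 0 (by decide) 1
      have r1 : MLDRAux.encv m' 1 2 = MLDRAux.encv m 1 2 := key 1 (by decide) 1
      have r3 : MLDRAux.encv m' 3 3 = MLDRAux.encv m 3 3 := key 3 (by decide) 1
      exact congrArg finFunctionFinEquiv (funext (MLDRAux.R2 t0 t1 t3 r0 r1 r3))
    · -- j = 3, helpers 0 1 2
      have t0 : MLDRAux.encv m' 0 0 = MLDRAux.encv m 0 0 := key 0 (by decide) 0
      have t1 : MLDRAux.encv m' 1 0 = MLDRAux.encv m 1 0 := key 1 (by decide) 0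
      have t2 : MLDRAux.encv m' 2 0 = MLDRAux.encv m 2 0 := key 2 (by decide) 0
      have r0 : MLDRAux.encv m' 0 3 = MLDRAux.encv m 0 3 := key 0 (by decide) 1
      have r1 : MLDRAux.encv m' 1 3 = MLDRAux.encv m 1 3 := key 1 (by decide) 1
      have r2 : MLDRAux.encv m' 2 3 = MLDRAux.encv m 2 3 := key 2 (by decide) 1
      exact congrArg finFunctionFinEquiv (funext (MLDRAux.R3 t0 t1 t2 r0 r1 r2))
end

section
/- Let B_1, B_2 ≥ 0 be real numbers. Then the set { (α, β) ∈ ℝ² : there exist reals α_1, β_1, α_2, β_2 with α = α_1 + α_2, β = β_1 + β_2, α_1 ≥ B_1, β_1 ≥ B_1/2, 2α_2 ≥ B_2, α_2 + β_2 ≥ B_2, 3β_2 ≥ B_2 } is equal to { (α, β) ∈ ℝ² : α ≥ B_1 + B_2/2, α + β ≥ (3/2)B_1 + B_2, β ≥ B_1/2 + B_2/3 }. -/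
/-- **Proposition 1 (separate coding region, n = 3).** The storage–repair-bandwidth
region achievable by separate coding with 3 nodes, obtained as the Minkowski sum of the
rate regions of `(3,1,2)` and `(3,2,2)` regenerating codes, equals the polyhedron
`{(α, β) : α ≥ B₁ + B₂/2, α + β ≥ (3/2)B₁ + B₂, β ≥ B₁/2 + B₂/3}`. -/
theorem separate_coding_region_three_nodes (B1 B2 : ℝ) (hB1 : 0 ≤ B1) (hB2 : 0 ≤ B2) :
    {p : ℝ × ℝ | ∃ a1 b1 a2 b2 : ℝ,
        p.1 = a1 + a2 ∧ p.2 = b1 + b2 ∧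
        a1 ≥ B1 ∧ b1 ≥ B1 / 2 ∧
        2 * a2 ≥ B2 ∧ a2 + b2 ≥ B2 ∧ 3 * b2 ≥ B2} =
    {p : ℝ × ℝ | p.1 ≥ B1 + B2 / 2 ∧
        p.1 + p.2 ≥ (3 / 2) * B1 + B2 ∧
        p.2 ≥ B1 / 2 + B2 / 3} := by
  ext p
  simp only [Set.mem_setOf_eq]
  constructor
  · rintro ⟨a1, b1, a2, b2, h1, h2, h3, h4, h5, h6, h7⟩
    refine ⟨by linarith, by linarith, by linarith⟩
  · rintro ⟨h1, h2, h3⟩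
    refine ⟨p.1 - max (B2 / 2) (B2 - (p.2 - B1 / 2)), B1 / 2,
      max (B2 / 2) (B2 - (p.2 - B1 / 2)), p.2 - B1 / 2, by ring, by ring, ?_, le_refl _,
      ?_, ?_, by linarith⟩
    · rcases le_or_gt (B2 - (p.2 - B1 / 2)) (B2 / 2) with h | h
      · rw [max_eq_left h]; linarith
      · rw [max_eq_right h.le]; linarith
    · have := le_max_left (B2 / 2) (B2 - (p.2 - B1 / 2)); linarith
    · have := le_max_right (B2 / 2) (B2 - (p.2 - B1 / 2)); linarith
end

section
/- Let B_1, B_2, B_3 ≥ 0 be real numbers. Then the set { (α, β) ∈ ℝ² : there exist reals α_1, β_1, α_2, β_2, α_3, β_3 with α = α_1 + α_2 + α_3, β = β_1 + β_2 + β_3, α_1 ≥ B_1, β_1 ≥ B_1/3, 2α_2 ≥ B_2, α_2 + 2β_2 ≥ B_2, 5β_2 ≥ B_2, 3α_3 ≥ B_3, 2α_3 + β_3 ≥ B_3, 4α_3 + 6β_3 ≥ 3B_3, 6β_3 ≥ B_3 } is equal to the separate-coding polyhedron P̃(B_1, B_2, B_3). -/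
/-- The separate-coding polyhedron `P̃(B₁, B₂, B₃)` for 4 nodes (Proposition 2). -/
def sepRegion4 (B1 B2 B3 : ℝ) : Set (ℝ × ℝ) :=
  {p : ℝ × ℝ |
    p.1 ≥ B1 + B2 / 2 + B3 / 3 ∧
    2 * p.1 + p.2 ≥ (7 / 3) * B1 + (5 / 4) * B2 + B3 ∧
    4 * p.1 + 6 * p.2 ≥ 6 * B1 + (7 / 2) * B2 + 3 * B3 ∧
    p.1 + 2 * p.2 ≥ (5 / 3) * B1 + B2 + (5 / 6) * B3 ∧
    p.2 ≥ B1 / 3 + B2 / 5 + B3 / 6}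

/-- The optimal-tradeoff polyhedron `P(B₁, B₂, B₃)` for 4 nodes (Theorem 3). -/
def optRegion4 (B1 B2 B3 : ℝ) : Set (ℝ × ℝ) :=
  {p : ℝ × ℝ |
    p.1 ≥ B1 + B2 / 2 + B3 / 3 ∧
    2 * p.1 + p.2 ≥ (7 / 3) * B1 + (5 / 4) * B2 + B3 ∧
    p.1 + p.2 ≥ (4 / 3) * B1 + (3 / 4) * B2 + (5 / 8) * B3 ∧
    2 * p.1 + 3 * p.2 ≥ 3 * B1 + (5 / 3) * B2 + (3 / 2) * B3 ∧
    p.1 + 2 * p.2 ≥ (5 / 3) * B1 + B2 + (5 / 6) * B3 ∧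
    p.2 ≥ B1 / 3 + B2 / 5 + B3 / 6}

/-- **Proposition 2 (separate coding region, n = 4).** The storage–repair-bandwidth region
achievable by separate coding with 4 nodes, i.e. the Minkowski sum of the rate regions of
`(4,1,3)`, `(4,2,3)` and `(4,3,3)` regenerating codes, equals the separate-coding
polyhedron `P̃(B₁, B₂, B₃)`. -/
theorem separate_coding_region_four_nodes (B1 B2 B3 : ℝ)
    (hB1 : 0 ≤ B1) (hB2 : 0 ≤ B2) (hB3 : 0 ≤ B3) :
    {p : ℝ × ℝ | ∃ a1 b1 a2 b2 a3 b3 : ℝ,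
        p.1 = a1 + a2 + a3 ∧ p.2 = b1 + b2 + b3 ∧
        a1 ≥ B1 ∧ b1 ≥ B1 / 3 ∧
        2 * a2 ≥ B2 ∧ a2 + 2 * b2 ≥ B2 ∧ 5 * b2 ≥ B2 ∧
        3 * a3 ≥ B3 ∧ 2 * a3 + b3 ≥ B3 ∧ 4 * a3 + 6 * b3 ≥ 3 * B3 ∧ 6 * b3 ≥ B3} =
    sepRegion4 B1 B2 B3 := by
  ext p
  constructor
  · rintro ⟨a1, b1, a2, b2, a3, b3, hα, hβ, h1, h2, h3, h4, h5, h6, h7, h8, h9⟩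
    refine ⟨?_, ?_, ?_, ?_, ?_⟩ <;> simp only [hα, hβ] <;> linarith
  · rintro ⟨h1, h2, h3, h4, h5⟩
    rcases le_total (B2 / 4) (p.2 - B1 / 3 - B3 / 6) with hc | hc
    · exact ⟨B1, B1 / 3, B2 / 2, B2 / 4, p.1 - B1 - B2 / 2, p.2 - B1 / 3 - B2 / 4,
        by ring, by ring, le_refl _, le_refl _, by linarith, by linarith, by linarith,
        by linarith, by linarith, by linarith, by linarith⟩
    · exact ⟨B1, B1 / 3, B2 - 2 * (p.2 - B1 / 3 - B3 / 6), p.2 - B1 / 3 - B3 / 6,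
        p.1 - B1 - (B2 - 2 * (p.2 - B1 / 3 - B3 / 6)), B3 / 6,
        by ring, by ring, le_refl _, le_refl _, by linarith, by linarith, by linarith,
        by linarith, by linarith, by linarith, by linarith⟩
end

section
/- For (B_1, B_2, B_3) = (0, 1/3, 2/3), the separate-coding polyhedron is a proper subset of the optimal-tradeoff polyhedron: P̃(0, 1/3, 2/3) ⊊ P(0, 1/3, 2/3). In particular, the pair (α, β) = (4/9, 2/9) satisfies all six inequalities defining P(0, 1/3, 2/3), but violates the separate-coding inequality 4α + 6β ≥ 6B_1 + (7/2)B_2 + 3B_3 (since 28/9 < 19/6), and hence lies in P(0, 1/3, 2/3) \ P̃(0, 1/3, 2/3). -/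
/-- **Corollary 2 (mixing helps).** For `(B₁, B₂, B₃) = (0, 1/3, 2/3)`, the
separate-coding polyhedron is a *proper* subset of the optimal-tradeoff polyhedron;
in particular the point `(α, β) = (4/9, 2/9)` lies in `P(0, 1/3, 2/3)` but not in
`P̃(0, 1/3, 2/3)`. -/
theorem sepRegion4_ssubset_optRegion4 :
    sepRegion4 0 (1 / 3) (2 / 3) ⊂ optRegion4 0 (1 / 3) (2 / 3) ∧
    ((4 / 9 : ℝ), (2 / 9 : ℝ)) ∈ optRegion4 0 (1 / 3) (2 / 3) \ sepRegion4 0 (1 / 3) (2 / 3) := by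
  have hmem : ((4 / 9 : ℝ), (2 / 9 : ℝ)) ∈ optRegion4 0 (1 / 3) (2 / 3) \ sepRegion4 0 (1 / 3) (2 / 3) := by
    constructor
    · refine ⟨?_, ?_, ?_, ?_, ?_, ?_⟩ <;> norm_num [optRegion4]
    · intro h
      obtain ⟨_, _, h3, _, _⟩ := h
      norm_num at h3
  refine ⟨⟨?_, ?_⟩, hmem⟩
  · rintro ⟨a, b⟩ ⟨h1, h2, h3, h4, h5⟩
    refine ⟨h1, h2, by linarith, by linarith, h4, h5⟩
  · intro hsub
    exact hmem.2 (hsub hmem.1)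
end

section
/- For all real numbers B_1, B_2, B_3 ≥ 0, the separate-coding polyhedron P̃(B_1, B_2, B_3) equals the Minkowski sum of the convex hull of the four points p_1 = (B_1 + B_2/2 + B_3/3, B_1/3 + B_2/4 + B_3/3), p_2 = (B_1 + B_2/2 + 3B_3/8, B_1/3 + B_2/4 + B_3/4), p_3 = (B_1 + B_2/2 + B_3/2, B_1/3 + B_2/4 + B_3/6), p_4 = (B_1 + 3B_2/5 + B_3/2, B_1/3 + B_2/5 + B_3/6) with the nonnegative orthant { (u, v) ∈ ℝ² : u ≥ 0, v ≥ 0 }. -/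
open scoped Pointwise

lemma mem_sepRegion4 {B1 B2 B3 a b : ℝ} :
    (a, b) ∈ sepRegion4 B1 B2 B3 ↔
      (a ≥ B1 + B2 / 2 + B3 / 3 ∧
       2 * a + b ≥ (7 / 3) * B1 + (5 / 4) * B2 + B3 ∧
       4 * a + 6 * b ≥ 6 * B1 + (7 / 2) * B2 + 3 * B3 ∧
       a + 2 * b ≥ (5 / 3) * B1 + B2 + (5 / 6) * B3 ∧
       b ≥ B1 / 3 + B2 / 5 + B3 / 6) := Iff.rfl

lemma sepRegion4_convex (B1 B2 B3 : ℝ) : Convex ℝ (sepRegion4 B1 B2 B3) := by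
  have l1 : IsLinearMap ℝ (fun p : ℝ × ℝ => p.1) :=
    ⟨fun _ _ => rfl, fun _ _ => rfl⟩
  have l2 : IsLinearMap ℝ (fun p : ℝ × ℝ => 2 * p.1 + p.2) := by
    constructor <;> intros <;>
      simp only [Prod.fst_add, Prod.snd_add, Prod.smul_fst, Prod.smul_snd, smul_eq_mul] <;> ring
  have l3 : IsLinearMap ℝ (fun p : ℝ × ℝ => 4 * p.1 + 6 * p.2) := by
    constructor <;> intros <;>
      simp only [Prod.fst_add, Prod.snd_add, Prod.smul_fst, Prod.smul_snd, smul_eq_mul] <;> ring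
  have l4 : IsLinearMap ℝ (fun p : ℝ × ℝ => p.1 + 2 * p.2) := by
    constructor <;> intros <;>
      simp only [Prod.fst_add, Prod.snd_add, Prod.smul_fst, Prod.smul_snd, smul_eq_mul] <;> ring
  have l5 : IsLinearMap ℝ (fun p : ℝ × ℝ => p.2) :=
    ⟨fun _ _ => rfl, fun _ _ => rfl⟩
  exact (convex_halfSpace_ge l1 _).inter ((convex_halfSpace_ge l2 _).inter
    ((convex_halfSpace_ge l3 _).inter ((convex_halfSpace_ge l4 _).inter
      (convex_halfSpace_ge l5 _))))

set_option maxHeartbeats 1000000 in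
/-- The separate-coding polyhedron `P̃(B₁, B₂, B₃)` equals the Minkowski sum of the convex
hull of its four corner points with the nonnegative orthant. -/
theorem sepRegion4_eq_convexHull_add_orthant (B1 B2 B3 : ℝ)
    (hB1 : 0 ≤ B1) (hB2 : 0 ≤ B2) (hB3 : 0 ≤ B3) :
    sepRegion4 B1 B2 B3 =
      (convexHull ℝ
        {(B1 + B2 / 2 + B3 / 3, B1 / 3 + B2 / 4 + B3 / 3),
         (B1 + B2 / 2 + 3 * B3 / 8, B1 / 3 + B2 / 4 + B3 / 4),
         (B1 + B2 / 2 + B3 / 2, B1 / 3 + B2 / 4 + B3 / 6),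
         (B1 + 3 * B2 / 5 + B3 / 2, B1 / 3 + B2 / 5 + B3 / 6)} : Set (ℝ × ℝ)) +
      {u : ℝ × ℝ | 0 ≤ u.1 ∧ 0 ≤ u.2} := by
  have hmem1 : ((B1 + B2 / 2 + B3 / 3, B1 / 3 + B2 / 4 + B3 / 3) : ℝ × ℝ) ∈
      ({(B1 + B2 / 2 + B3 / 3, B1 / 3 + B2 / 4 + B3 / 3),
        (B1 + B2 / 2 + 3 * B3 / 8, B1 / 3 + B2 / 4 + B3 / 4),
        (B1 + B2 / 2 + B3 / 2, B1 / 3 + B2 / 4 + B3 / 6),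
        (B1 + 3 * B2 / 5 + B3 / 2, B1 / 3 + B2 / 5 + B3 / 6)} : Set (ℝ × ℝ)) :=
    Set.mem_insert _ _
  have hmem2 : ((B1 + B2 / 2 + 3 * B3 / 8, B1 / 3 + B2 / 4 + B3 / 4) : ℝ × ℝ) ∈
      ({(B1 + B2 / 2 + B3 / 3, B1 / 3 + B2 / 4 + B3 / 3),
        (B1 + B2 / 2 + 3 * B3 / 8, B1 / 3 + B2 / 4 + B3 / 4),
        (B1 + B2 / 2 + B3 / 2, B1 / 3 + B2 / 4 + B3 / 6),
        (B1 + 3 * B2 / 5 + B3 / 2, B1 / 3 + B2 / 5 + B3 / 6)} : Set (ℝ × ℝ)) :=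
    Set.mem_insert_iff.2 (Or.inr (Set.mem_insert _ _))
  have hmem3 : ((B1 + B2 / 2 + B3 / 2, B1 / 3 + B2 / 4 + B3 / 6) : ℝ × ℝ) ∈
      ({(B1 + B2 / 2 + B3 / 3, B1 / 3 + B2 / 4 + B3 / 3),
        (B1 + B2 / 2 + 3 * B3 / 8, B1 / 3 + B2 / 4 + B3 / 4),
        (B1 + B2 / 2 + B3 / 2, B1 / 3 + B2 / 4 + B3 / 6),
        (B1 + 3 * B2 / 5 + B3 / 2, B1 / 3 + B2 / 5 + B3 / 6)} : Set (ℝ × ℝ)) :=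
    Set.mem_insert_iff.2 (Or.inr (Set.mem_insert_iff.2 (Or.inr (Set.mem_insert _ _))))
  have hmem4 : ((B1 + 3 * B2 / 5 + B3 / 2, B1 / 3 + B2 / 5 + B3 / 6) : ℝ × ℝ) ∈
      ({(B1 + B2 / 2 + B3 / 3, B1 / 3 + B2 / 4 + B3 / 3),
        (B1 + B2 / 2 + 3 * B3 / 8, B1 / 3 + B2 / 4 + B3 / 4),
        (B1 + B2 / 2 + B3 / 2, B1 / 3 + B2 / 4 + B3 / 6),
        (B1 + 3 * B2 / 5 + B3 / 2, B1 / 3 + B2 / 5 + B3 / 6)} : Set (ℝ × ℝ)) :=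
    Set.mem_insert_iff.2 (Or.inr (Set.mem_insert_iff.2 (Or.inr
      (Set.mem_insert_iff.2 (Or.inr rfl)))))
  apply Set.Subset.antisymm
  · rintro ⟨α, β⟩ hmem
    rw [mem_sepRegion4] at hmem
    obtain ⟨h1, h2, h3, h4, h5⟩ := hmem
    rw [Set.mem_add]
    rcases le_or_gt (B1 / 3 + B2 / 4 + B3 / 3) β with hcA | hcA
    · refine ⟨(B1 + B2 / 2 + B3 / 3, B1 / 3 + B2 / 4 + B3 / 3), subset_convexHull ℝ _ hmem1,
        (α - (B1 + B2 / 2 + B3 / 3), β - (B1 / 3 + B2 / 4 + B3 / 3)),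
        ⟨by simpa using by linarith, by simpa using by linarith⟩, ?_⟩
      simp only [Prod.mk_add_mk, Prod.mk.injEq]
      constructor <;> ring
    rcases le_or_gt (B1 / 3 + B2 / 4 + B3 / 4) β with hcB | hcB
    · have hB3pos : 0 < B3 := by linarith
      have hB3ne : B3 ≠ 0 := hB3pos.ne'
      refine ⟨((B1 + B2 / 2 + B3 / 3) + ((B1 / 3 + B2 / 4 + B3 / 3) - β) / 2, β), ?_,
        (α - ((B1 + B2 / 2 + B3 / 3) + ((B1 / 3 + B2 / 4 + B3 / 3) - β) / 2), 0),
        ⟨by simpa using by linarith, by simp⟩, ?_⟩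
      · apply segment_subset_convexHull hmem1 hmem2
        refine ⟨1 - 12 * ((B1 / 3 + B2 / 4 + B3 / 3) - β) / B3,
          12 * ((B1 / 3 + B2 / 4 + B3 / 3) - β) / B3, ?_, ?_, by ring, ?_⟩
        · rw [sub_nonneg, div_le_one hB3pos]; linarith
        · exact div_nonneg (by linarith) hB3pos.le
        · simp only [Prod.smul_mk, Prod.mk_add_mk, smul_eq_mul, Prod.mk.injEq]
          constructor <;> (field_simp; ring)
      · simp only [Prod.mk_add_mk, Prod.mk.injEq]
        constructor <;> ring
    rcases le_or_gt (B1 / 3 + B2 / 4 + B3 / 6) β with hcC | hcC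
    · have hB3pos : 0 < B3 := by linarith
      have hB3ne : B3 ≠ 0 := hB3pos.ne'
      refine ⟨((B1 + B2 / 2 + 3 * B3 / 8) + 3 / 2 * ((B1 / 3 + B2 / 4 + B3 / 4) - β), β), ?_,
        (α - ((B1 + B2 / 2 + 3 * B3 / 8) + 3 / 2 * ((B1 / 3 + B2 / 4 + B3 / 4) - β)), 0),
        ⟨by simpa using by linarith, by simp⟩, ?_⟩
      · apply segment_subset_convexHull hmem2 hmem3
        refine ⟨1 - 12 * ((B1 / 3 + B2 / 4 + B3 / 4) - β) / B3,
          12 * ((B1 / 3 + B2 / 4 + B3 / 4) - β) / B3, ?_, ?_, by ring, ?_⟩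
        · rw [sub_nonneg, div_le_one hB3pos]; linarith
        · exact div_nonneg (by linarith) hB3pos.le
        · simp only [Prod.smul_mk, Prod.mk_add_mk, smul_eq_mul, Prod.mk.injEq]
          constructor <;> (field_simp; ring)
      · simp only [Prod.mk_add_mk, Prod.mk.injEq]
        constructor <;> ring
    · have hB2pos : 0 < B2 := by linarith
      have hB2ne : B2 ≠ 0 := hB2pos.ne'
      refine ⟨((B1 + B2 / 2 + B3 / 2) + 2 * ((B1 / 3 + B2 / 4 + B3 / 6) - β), β), ?_,
        (α - ((B1 + B2 / 2 + B3 / 2) + 2 * ((B1 / 3 + B2 / 4 + B3 / 6) - β)), 0),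
        ⟨by simpa using by linarith, by simp⟩, ?_⟩
      · apply segment_subset_convexHull hmem3 hmem4
        refine ⟨1 - 20 * ((B1 / 3 + B2 / 4 + B3 / 6) - β) / B2,
          20 * ((B1 / 3 + B2 / 4 + B3 / 6) - β) / B2, ?_, ?_, by ring, ?_⟩
        · rw [sub_nonneg, div_le_one hB2pos]; linarith
        · exact div_nonneg (by linarith) hB2pos.le
        · simp only [Prod.smul_mk, Prod.mk_add_mk, smul_eq_mul, Prod.mk.injEq]
          constructor <;> (field_simp; ring)
      · simp only [Prod.mk_add_mk, Prod.mk.injEq]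
        constructor <;> ring
  · have hSsub : ({(B1 + B2 / 2 + B3 / 3, B1 / 3 + B2 / 4 + B3 / 3),
        (B1 + B2 / 2 + 3 * B3 / 8, B1 / 3 + B2 / 4 + B3 / 4),
        (B1 + B2 / 2 + B3 / 2, B1 / 3 + B2 / 4 + B3 / 6),
        (B1 + 3 * B2 / 5 + B3 / 2, B1 / 3 + B2 / 5 + B3 / 6)} : Set (ℝ × ℝ)) ⊆
        sepRegion4 B1 B2 B3 := by
      intro p hp
      simp only [Set.mem_insert_iff, Set.mem_singleton_iff] at hp
      rcases hp with rfl | rfl | rfl | rfl <;>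
        · rw [mem_sepRegion4]
          refine ⟨by linarith, by linarith, by linarith, by linarith, by linarith⟩
    have hhull := convexHull_min hSsub (sepRegion4_convex B1 B2 B3)
    rintro x hx
    rw [Set.mem_add] at hx
    obtain ⟨q, hq, u, ⟨hu1, hu2⟩, rfl⟩ := hx
    obtain ⟨g1, g2, g3, g4, g5⟩ := hhull hq
    refine ⟨?_, ?_, ?_, ?_, ?_⟩ <;>
      · simp only [Prod.fst_add, Prod.snd_add]
        linarith
end
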